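/- With the setup of the two-phase periodic cell problem (2 ≤ p₁ ≤ p₂, corrector p(y,ξ) = ξ + ∇v_ξ(y) solving the cell problem, θᵢ = ∫_Y χᵢ(y) dy), there exists C > 0 independent of ξ such that for every ξ ∈ ℝⁿ, ∫_Y χ₁(y)|p(y,ξ)|^{p₁} dy + ∫_Y χ₂(y)|p(y,ξ)|^{p₂} dy ≤ C (1 + |ξ|^{p₁} θ₁ + |ξ|^{p₂} θ₂). -/

import Mathlib

open Real MeasureTheory
open scoped RealInnerProductSpace

private lemma pow_one_add_bound (p t : ℝ) (hp : 0 ≤ p) (ht : 0 ≤ t) :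
    (1 + t) ^ p ≤ 2 ^ p * (1 + t ^ p) := by
  have h3 : (0:ℝ) < 2 ^ p := Real.rpow_pos_of_pos (by norm_num) p
  rcases le_total t 1 with h | h
  · have h1 : (1 + t) ^ p ≤ 2 ^ p :=
      Real.rpow_le_rpow (by linarith) (by linarith) hp
    have h2 : (0:ℝ) ≤ t ^ p := Real.rpow_nonneg ht p
    nlinarith
  · have h1 : (1 + t) ^ p ≤ (2 * t) ^ p :=
      Real.rpow_le_rpow (by linarith) (by linarith) hp
    have h2 : (2 * t) ^ p = 2 ^ p * t ^ p := Real.mul_rpow (by norm_num) ht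
    nlinarith

private lemma young_delta (p δ : ℝ) (hp : 1 ≤ p) (hδ : 0 < δ) :
    ∃ K : ℝ, 0 < K ∧ ∀ s t : ℝ, 0 ≤ s → 0 ≤ t →
      s * (1 + t) ^ (p - 1) ≤ δ * (1 + t ^ p) + K * s ^ p := by
  have h2p : (0:ℝ) < 2 ^ p := Real.rpow_pos_of_pos (by norm_num) p
  set ε := δ / 2 ^ p with hε_def
  have hε : 0 < ε := div_pos hδ h2p
  refine ⟨(ε ^ (p - 1))⁻¹, inv_pos.mpr (Real.rpow_pos_of_pos hε _), fun s t hs ht => ?_⟩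
  have h1t : (0:ℝ) < 1 + t := by linarith
  have htp : (0:ℝ) ≤ t ^ p := Real.rpow_nonneg ht p
  have hmul : (1 + t) ^ p = (1 + t) * (1 + t) ^ (p - 1) := by
    nth_rewrite 1 [show p = 1 + (p - 1) by ring]
    rw [Real.rpow_add h1t, Real.rpow_one]
  rcases le_total s (ε * (1 + t)) with hcase | hcase
  · have key : s * (1 + t) ^ (p - 1) ≤ ε * (1 + t) ^ p := by
      have h := mul_le_mul_of_nonneg_right hcase (Real.rpow_nonneg h1t.le (p - 1))
      rw [hmul]; nlinarith [h]
    have hb : (1 + t) ^ p ≤ 2 ^ p * (1 + t ^ p) := pow_one_add_bound p t (by linarith) ht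
    have hεb : ε * (2 ^ p * (1 + t ^ p)) = δ * (1 + t ^ p) := by
      rw [hε_def]; field_simp
    have hK : 0 ≤ (ε ^ (p - 1))⁻¹ * s ^ p := by positivity
    nlinarith [mul_le_mul_of_nonneg_left hb hε.le]
  · have hs' : 0 < s := lt_of_lt_of_le (by positivity) hcase
    have h1 : 1 + t ≤ s / ε := (le_div_iff₀ hε).mpr (by linarith)
    have h2 : (1 + t) ^ (p - 1) ≤ (s / ε) ^ (p - 1) :=
      Real.rpow_le_rpow h1t.le h1 (by linarith)
    have h3 : (s / ε) ^ (p - 1) = s ^ (p - 1) / ε ^ (p - 1) :=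
      Real.div_rpow hs'.le hε.le (p - 1)
    have h4 : s * s ^ (p - 1) = s ^ p := by
      nth_rewrite 1 [show s = s ^ (1:ℝ) from (Real.rpow_one s).symm]
      rw [← Real.rpow_add hs', show (1:ℝ)+(p-1) = p by ring]
    have hεp : 0 < ε ^ (p - 1) := Real.rpow_pos_of_pos hε _
    have : s * (1 + t) ^ (p - 1) ≤ s * (s ^ (p - 1) / ε ^ (p - 1)) := by
      rw [← h3]; exact mul_le_mul_of_nonneg_left h2 hs'.le
    have heq : s * (s ^ (p - 1) / ε ^ (p - 1)) = (ε ^ (p - 1))⁻¹ * s ^ p := by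
      rw [← h4]; field_simp
    nlinarith [this]
theorem stmt5 (n : ℕ) (p₁ p₂ σ₁ σ₂ C₁ C₂ : ℝ) (hp₁ : 2 ≤ p₁) (hp₁₂ : p₁ ≤ p₂)
    (hσ₁ : 0 < σ₁) (hσ₂ : 0 < σ₂) (hC₁ : 0 < C₁) (hC₂ : 0 < C₂)
    (Y : Set (EuclideanSpace ℝ (Fin n)))
    (hY : Y = {y | ∀ i, y i ∈ Set.Ioo (0 : ℝ) 1})
    (χ₁ χ₂ : EuclideanSpace ℝ (Fin n) → ℝ)
    (hχ : ∀ y, χ₁ y = 0 ∨ χ₁ y = 1) (hsum : ∀ y, χ₁ y + χ₂ y = 1)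
    (A : EuclideanSpace ℝ (Fin n) → EuclideanSpace ℝ (Fin n) → EuclideanSpace ℝ (Fin n))
    (hA : ∀ y ξ, A y ξ = (χ₁ y * σ₁ * ‖ξ‖ ^ (p₁ - 2) + χ₂ y * σ₂ * ‖ξ‖ ^ (p₂ - 2)) • ξ)
    -- growth (continuity) structure condition
    (hgrowth : ∀ y ξ, ‖A y ξ‖ ≤
      C₁ * (χ₁ y * (1 + ‖ξ‖) ^ (p₁ - 1) + χ₂ y * (1 + ‖ξ‖) ^ (p₂ - 1)))
    -- monotonicity structure condition
    (hmon : ∀ y, ∀ ξ₁ ξ₂ : EuclideanSpace ℝ (Fin n),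
      C₂ * (χ₁ y * ‖ξ₁ - ξ₂‖ ^ p₁ + χ₂ y * ‖ξ₁ - ξ₂‖ ^ p₂) ≤ ⟪A y ξ₁ - A y ξ₂, ξ₁ - ξ₂⟫)
    -- corrector p(y,ξ) = ξ + ∇v_ξ(y), cell problem tested with w = v_ξ
    (pc : EuclideanSpace ℝ (Fin n) → EuclideanSpace ℝ (Fin n) → EuclideanSpace ℝ (Fin n))
    (hcell : ∀ ξ : EuclideanSpace ℝ (Fin n),
      ∫ y in Y, ⟪A y (pc y ξ), pc y ξ - ξ⟫ = 0)
    -- integrability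
    (hIntA : ∀ ξ, IntegrableOn (fun y => A y (pc y ξ)) Y)
    (hIntIP : ∀ ξ, IntegrableOn (fun y => ⟪A y (pc y ξ), pc y ξ⟫) Y)
    (hInt1 : ∀ ξ, IntegrableOn (fun y => χ₁ y * ‖pc y ξ‖ ^ p₁) Y)
    (hInt2 : ∀ ξ, IntegrableOn (fun y => χ₂ y * ‖pc y ξ‖ ^ p₂) Y)
    (hIntχ : IntegrableOn χ₁ Y ∧ IntegrableOn χ₂ Y) :
    ∃ C > 0, ∀ ξ : EuclideanSpace ℝ (Fin n),
      (∫ y in Y, χ₁ y * ‖pc y ξ‖ ^ p₁) + (∫ y in Y, χ₂ y * ‖pc y ξ‖ ^ p₂) ≤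
        C * (1 + ‖ξ‖ ^ p₁ * (∫ y in Y, χ₁ y) + ‖ξ‖ ^ p₂ * (∫ y in Y, χ₂ y)) := by
  have hχ₁0 : ∀ y, 0 ≤ χ₁ y := fun y => by rcases hχ y with h | h <;> simp [h]
  have hχ₂0 : ∀ y, 0 ≤ χ₂ y := fun y => by
    have := hsum y; rcases hχ y with h | h <;> linarith
  obtain ⟨K₁, hK₁, hY₁⟩ := young_delta p₁ (C₂ / (2 * C₁)) (by linarith) (by positivity)
  obtain ⟨K₂, hK₂, hY₂⟩ := young_delta p₂ (C₂ / (2 * C₁)) (by linarith) (by positivity)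
  set θ₁ := ∫ y in Y, χ₁ y with hθ₁def
  set θ₂ := ∫ y in Y, χ₂ y with hθ₂def
  have hθ₁0 : 0 ≤ θ₁ := integral_nonneg fun y => hχ₁0 y
  have hθ₂0 : 0 ≤ θ₂ := integral_nonneg fun y => hχ₂0 y
  refine ⟨θ₁ + θ₂ + 1 + 2 * C₁ * K₁ / C₂ + 2 * C₁ * K₂ / C₂, by positivity, fun ξ => ?_⟩
  set s := ‖ξ‖ with hsdef
  have hs0 : 0 ≤ s := norm_nonneg ξ
  set I₁ := ∫ y in Y, χ₁ y * ‖pc y ξ‖ ^ p₁ with hI₁def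
  set I₂ := ∫ y in Y, χ₂ y * ‖pc y ξ‖ ^ p₂ with hI₂def
  have hA0 : ∀ y, A y 0 = 0 := fun y => by rw [hA]; simp
  -- pointwise lower bound
  have hlow : ∀ y, C₂ * (χ₁ y * ‖pc y ξ‖ ^ p₁ + χ₂ y * ‖pc y ξ‖ ^ p₂)
      ≤ ⟪A y (pc y ξ), pc y ξ⟫ := by
    intro y
    have h := hmon y (pc y ξ) 0
    simpa [hA0 y, sub_zero] using h
  -- integrability of inner product with ξ
  have hIntξ : IntegrableOn (fun y => ⟪A y (pc y ξ), ξ⟫) Y := by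
    have heq : (fun y => ⟪A y (pc y ξ), ξ⟫)
        = fun y => (innerSL ℝ ξ) (A y (pc y ξ)) := by
      funext y; exact real_inner_comm _ _
    rw [heq]
    exact (innerSL ℝ ξ).integrable_comp (hIntA ξ)
  -- cell problem: ∫⟪Ap,p⟫ = ∫⟪Ap,ξ⟫
  have hMN : (∫ y in Y, ⟪A y (pc y ξ), pc y ξ⟫) = ∫ y in Y, ⟪A y (pc y ξ), ξ⟫ := by
    have h := hcell ξ
    have heq : (fun y => ⟪A y (pc y ξ), pc y ξ - ξ⟫)
        = fun y => ⟪A y (pc y ξ), pc y ξ⟫ - ⟪A y (pc y ξ), ξ⟫ := by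
      funext y; exact inner_sub_right _ _ _
    rw [heq, integral_sub (hIntIP ξ) hIntξ] at h
    linarith
  -- integrated lower bound
  have hlowint : C₂ * (I₁ + I₂) ≤ ∫ y in Y, ⟪A y (pc y ξ), pc y ξ⟫ := by
    have hint : Integrable
        (fun y => C₂ * (χ₁ y * ‖pc y ξ‖ ^ p₁ + χ₂ y * ‖pc y ξ‖ ^ p₂))
        (volume.restrict Y) := ((hInt1 ξ).add (hInt2 ξ)).const_mul C₂
    have h := integral_mono hint (hIntIP ξ) hlow
    rw [integral_const_mul, integral_add (hInt1 ξ) (hInt2 ξ)] at h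
    exact h
  -- pointwise upper bound by the majorant
  have hup : ∀ y, ⟪A y (pc y ξ), ξ⟫ ≤
      C₂ / 2 * (χ₁ y + χ₂ y) + (C₂ / 2 * (χ₁ y * ‖pc y ξ‖ ^ p₁) +
        (C₂ / 2 * (χ₂ y * ‖pc y ξ‖ ^ p₂) +
          (C₁ * K₁ * s ^ p₁ * χ₁ y + C₁ * K₂ * s ^ p₂ * χ₂ y))) := by
    intro y
    set t := ‖pc y ξ‖ with htdef
    have ht0 : 0 ≤ t := norm_nonneg _
    have hinner : ⟪A y (pc y ξ), ξ⟫ ≤ ‖A y (pc y ξ)‖ * s :=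
      real_inner_le_norm _ _
    have hgr : ‖A y (pc y ξ)‖ * s ≤
        C₁ * (χ₁ y * (1 + t) ^ (p₁ - 1) + χ₂ y * (1 + t) ^ (p₂ - 1)) * s :=
      mul_le_mul_of_nonneg_right (hgrowth y (pc y ξ)) hs0
    have h1 := mul_le_mul_of_nonneg_left (hY₁ s t hs0 ht0)
      (mul_nonneg hC₁.le (hχ₁0 y))
    have h2 := mul_le_mul_of_nonneg_left (hY₂ s t hs0 ht0)
      (mul_nonneg hC₁.le (hχ₂0 y))
    have h1' : C₁ * χ₁ y * (C₂ / (2 * C₁) * (1 + t ^ p₁) + K₁ * s ^ p₁)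
        = C₂ / 2 * χ₁ y * (1 + t ^ p₁) + C₁ * K₁ * s ^ p₁ * χ₁ y := by
      field_simp
    have h2' : C₁ * χ₂ y * (C₂ / (2 * C₁) * (1 + t ^ p₂) + K₂ * s ^ p₂)
        = C₂ / 2 * χ₂ y * (1 + t ^ p₂) + C₁ * K₂ * s ^ p₂ * χ₂ y := by
      field_simp
    rw [h1'] at h1
    rw [h2'] at h2
    linarith
  -- integrability of the pieces of the majorant
  have i5 : Integrable (fun y => C₁ * K₁ * s ^ p₁ * χ₁ y + C₁ * K₂ * s ^ p₂ * χ₂ y)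
      (volume.restrict Y) := (hIntχ.1.const_mul _).add (hIntχ.2.const_mul _)
  have i4 : Integrable (fun y => C₂ / 2 * (χ₂ y * ‖pc y ξ‖ ^ p₂) +
      (C₁ * K₁ * s ^ p₁ * χ₁ y + C₁ * K₂ * s ^ p₂ * χ₂ y)) (volume.restrict Y) :=
    ((hInt2 ξ).const_mul _).add i5
  have i3 : Integrable (fun y => C₂ / 2 * (χ₁ y * ‖pc y ξ‖ ^ p₁) +
      (C₂ / 2 * (χ₂ y * ‖pc y ξ‖ ^ p₂) +
        (C₁ * K₁ * s ^ p₁ * χ₁ y + C₁ * K₂ * s ^ p₂ * χ₂ y))) (volume.restrict Y) :=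
    ((hInt1 ξ).const_mul _).add i4
  have i1 : Integrable (fun y => C₂ / 2 * (χ₁ y + χ₂ y)) (volume.restrict Y) :=
    (hIntχ.1.add hIntχ.2).const_mul _
  have hgint : Integrable (fun y => C₂ / 2 * (χ₁ y + χ₂ y) +
      (C₂ / 2 * (χ₁ y * ‖pc y ξ‖ ^ p₁) + (C₂ / 2 * (χ₂ y * ‖pc y ξ‖ ^ p₂) +
        (C₁ * K₁ * s ^ p₁ * χ₁ y + C₁ * K₂ * s ^ p₂ * χ₂ y)))) (volume.restrict Y) :=
    i1.add i3
  -- value of the integral of the majorant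
  have hgval : (∫ y in Y, (C₂ / 2 * (χ₁ y + χ₂ y) +
      (C₂ / 2 * (χ₁ y * ‖pc y ξ‖ ^ p₁) + (C₂ / 2 * (χ₂ y * ‖pc y ξ‖ ^ p₂) +
        (C₁ * K₁ * s ^ p₁ * χ₁ y + C₁ * K₂ * s ^ p₂ * χ₂ y)))))
      = C₂ / 2 * (θ₁ + θ₂) + (C₂ / 2 * I₁ +
      (C₂ / 2 * I₂ + (C₁ * K₁ * s ^ p₁ * θ₁ + C₁ * K₂ * s ^ p₂ * θ₂))) := by
    rw [integral_add i1 i3, integral_add ((hInt1 ξ).const_mul _) i4,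
      integral_add ((hInt2 ξ).const_mul _) i5,
      integral_add (hIntχ.1.const_mul _) (hIntχ.2.const_mul _),
      integral_const_mul, integral_const_mul, integral_const_mul, integral_const_mul,
      integral_const_mul, integral_add hIntχ.1 hIntχ.2]
  -- integrated upper bound
  have hupint : (∫ y in Y, ⟪A y (pc y ξ), ξ⟫) ≤ C₂ / 2 * (θ₁ + θ₂) + (C₂ / 2 * I₁ +
      (C₂ / 2 * I₂ + (C₁ * K₁ * s ^ p₁ * θ₁ + C₁ * K₂ * s ^ p₂ * θ₂))) := by
    rw [← hgval]
    exact integral_mono hIntξ hgint hup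
  -- combine
  have hchain : C₂ * (I₁ + I₂) ≤ C₂ / 2 * (θ₁ + θ₂) + (C₂ / 2 * I₁ +
      (C₂ / 2 * I₂ + (C₁ * K₁ * s ^ p₁ * θ₁ + C₁ * K₂ * s ^ p₂ * θ₂))) := by
    calc C₂ * (I₁ + I₂) ≤ ∫ y in Y, ⟪A y (pc y ξ), pc y ξ⟫ := hlowint
      _ = ∫ y in Y, ⟪A y (pc y ξ), ξ⟫ := hMN
      _ ≤ _ := hupint
  have ha : 0 ≤ s ^ p₁ * θ₁ := mul_nonneg (Real.rpow_nonneg hs0 _) hθ₁0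
  have hb : 0 ≤ s ^ p₂ * θ₂ := mul_nonneg (Real.rpow_nonneg hs0 _) hθ₂0
  have hd₁ : (0:ℝ) < 2 * C₁ * K₁ / C₂ := by positivity
  have hd₂ : (0:ℝ) < 2 * C₁ * K₂ / C₂ := by positivity
  have hstep : I₁ + I₂ ≤ (θ₁ + θ₂) + 2 * C₁ * K₁ / C₂ * (s ^ p₁ * θ₁)
      + 2 * C₁ * K₂ / C₂ * (s ^ p₂ * θ₂) := by
    rw [← mul_le_mul_iff_right₀ hC₂]
    have e1 : C₂ * (2 * C₁ * K₁ / C₂ * (s ^ p₁ * θ₁)) = 2 * (C₁ * K₁ * (s ^ p₁ * θ₁)) := by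
      field_simp
    have e2 : C₂ * (2 * C₁ * K₂ / C₂ * (s ^ p₂ * θ₂)) = 2 * (C₁ * K₂ * (s ^ p₂ * θ₂)) := by
      field_simp
    linarith [hchain]
  linarith [hstep, mul_nonneg (add_nonneg hθ₁0 hθ₂0) ha,
    mul_nonneg (add_nonneg hθ₁0 hθ₂0) hb, ha, hb,
    mul_nonneg hd₁.le hb, mul_nonneg hd₂.le ha, hd₁.le, hd₂.le]
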